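/- Let n ≥ 1 and let S be a bounded linear operator from the n-dimensional real Euclidean space ℓ₂ⁿ to itself. Then the absolute value of the determinant of S equals the product of its approximation numbers: |det S| = ∏_{k=1}^n a_k(S). -/

import Mathlib

/-- Approximation numbers. -/
noncomputable def approxNumber {X Y : Type*} [NormedAddCommGroup X] [NormedSpace ℝ X]
    [NormedAddCommGroup Y] [NormedSpace ℝ Y] (n : ℕ) (S : X →L[ℝ] Y) : ℝ :=
  sInf {r : ℝ | ∃ L : X →L[ℝ] Y, LinearMap.rank (L : X →ₗ[ℝ] Y) < n ∧ r = ‖S - L‖}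

/-!
The product of the singular values `σ₀ ≥ σ₁ ≥ ⋯` of `S` is `|det S|` (Mathlib's `normDet`), so it
suffices to show `a_{k+1}(T) = σ_k(T)` for every `T : E → F` between finite-dimensional spaces.
In an orthonormal eigenbasis `v` of `T* T` one has `‖T x‖² = ∑ σᵢ² ⟪vᵢ, x⟫²`. Composing `T` with
the orthogonal projection onto `span {vᵢ | i < k}` gives an operator of rank at most `k` within
distance `σ_k` of `T`. Conversely, an operator `L` of rank at most `k` kills some `x ≠ 0` in the
`(k+1)`-dimensional `span {vᵢ | i ≤ k}`, where `‖(T - L) x‖ = ‖T x‖ ≥ σ_k ‖x‖`.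
-/

open Module Finset
open scoped InnerProductSpace

namespace OrthonormalBasis

variable {ι 𝕜 E : Type*} [Fintype ι] [RCLike 𝕜] [NormedAddCommGroup E] [InnerProductSpace 𝕜 E]
  (b : OrthonormalBasis ι 𝕜 E)

theorem repr_apply_eq_zero_of_mem_span_image {s : Set ι} {x : E}
    (hx : x ∈ Submodule.span 𝕜 (b '' s)) {i : ι} (hi : i ∉ s) : b.repr x i = 0 := by
  rw [← b.coe_toBasis, b.toBasis.mem_span_image] at hx
  rw [← b.coe_toBasis_repr_apply]
  exact Finsupp.notMem_support_iff.mp fun h ↦ hi (hx h)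

theorem repr_apply_eq_zero_of_mem_orthogonal_span_image {s : Set ι} {x : E}
    (hx : x ∈ (Submodule.span 𝕜 (b '' s))ᗮ) {i : ι} (hi : i ∈ s) : b.repr x i = 0 := by
  rw [b.repr_apply_apply]
  exact Submodule.inner_right_of_mem_orthogonal
    (Submodule.subset_span (Set.mem_image_of_mem b hi)) hx

theorem finrank_span_image (s : Finset ι) :
    finrank 𝕜 (Submodule.span 𝕜 (b '' s)) = #s := by
  rw [Set.image_eq_range]
  exact (finrank_span_eq_card (b.orthonormal.linearIndependent.comp _ Subtype.val_injective)).trans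
    (Fintype.card_coe s)

end OrthonormalBasis

theorem LinearMap.exists_mem_ne_zero_map_eq_zero_of_finrank_range_lt {K V W : Type*}
    [DivisionRing K] [AddCommGroup V] [Module K V] [FiniteDimensional K V] [AddCommGroup W]
    [Module K W] {U : Submodule K V} (f : V →ₗ[K] W) (h : finrank K (range f) < finrank K U) :
    ∃ x ∈ U, x ≠ 0 ∧ f x = 0 := by
  obtain ⟨x, hx, hx0⟩ := Submodule.exists_mem_ne_zero_of_ne_bot
    (ker_ne_bot_of_finrank_lt (f := f.rangeRestrict ∘ₗ U.subtype) h)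
  exact ⟨x, x.2, fun h ↦ hx0 (Subtype.ext h), by simpa using congrArg Subtype.val hx⟩

theorem LinearMap.rank_lt_natCast_iff {K V W : Type*} [DivisionRing K] [AddCommGroup V]
    [Module K V] [FiniteDimensional K V] [AddCommGroup W] [Module K W] (f : V →ₗ[K] W) (n : ℕ) :
    f.rank < n ↔ finrank K (range f) < n := by
  rw [LinearMap.rank, ← finrank_eq_rank, Nat.cast_lt]

section approxNumber

variable {X Y : Type*} [NormedAddCommGroup X] [NormedSpace ℝ X] [NormedAddCommGroup Y]
  [NormedSpace ℝ Y] {n : ℕ} {S L : X →L[ℝ] Y}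

theorem approxNumber_le_norm_sub (hL : LinearMap.rank (L : X →ₗ[ℝ] Y) < n) :
    approxNumber n S ≤ ‖S - L‖ :=
  csInf_le ⟨0, by rintro _ ⟨L, -, rfl⟩; positivity⟩ ⟨L, hL, rfl⟩

theorem le_approxNumber (hn : n ≠ 0) {c : ℝ}
    (h : ∀ L : X →L[ℝ] Y, LinearMap.rank (L : X →ₗ[ℝ] Y) < n → c ≤ ‖S - L‖) :
    c ≤ approxNumber n S :=
  le_csInf ⟨_, 0, by simpa using Nat.pos_of_ne_zero hn, rfl⟩ fun _ ⟨L, hL, hr⟩ ↦ hr ▸ h L hL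

end approxNumber

namespace LinearMap

variable {E F : Type*} [NormedAddCommGroup E] [InnerProductSpace ℝ E] [FiniteDimensional ℝ E]
  [NormedAddCommGroup F] [InnerProductSpace ℝ F] [FiniteDimensional ℝ F] (T : E →ₗ[ℝ] F)

noncomputable def rightSingularBasis : OrthonormalBasis (Fin (finrank ℝ E)) ℝ E :=
  T.isSymmetric_adjoint_comp_self.eigenvectorBasis rfl

theorem norm_apply_sq_eq_sum (x : E) :
    ‖T x‖ ^ 2 =
      ∑ i : Fin (finrank ℝ E), T.singularValues i ^ 2 * T.rightSingularBasis.repr x i ^ 2 := by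
  calc ‖T x‖ ^ 2 = ⟪(adjoint T ∘ₗ T) x, x⟫_ℝ := by
        rw [comp_apply, adjoint_inner_left, real_inner_self_eq_norm_sq]
    _ = ⟪T.rightSingularBasis.repr ((adjoint T ∘ₗ T) x), T.rightSingularBasis.repr x⟫_ℝ :=
        (LinearIsometryEquiv.inner_map_map _ _ _).symm
    _ = _ := by
        simp only [rightSingularBasis, PiLp.inner_apply,
          IsSymmetric.eigenvectorBasis_apply_self_apply, sq_singularValues_fin]
        refine sum_congr rfl fun i _ ↦ ?_
        rw [RCLike.ofReal_real_eq_id, id_eq, Real.inner_apply]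
        ring

theorem norm_apply_le_singularValues_mul_norm {k : ℕ} {x : E}
    (hx : ∀ i : Fin (finrank ℝ E), (i : ℕ) < k → T.rightSingularBasis.repr x i = 0) :
    ‖T x‖ ≤ T.singularValues k * ‖x‖ := by
  refine le_of_sq_le_sq ?_ (mul_nonneg (T.singularValues_nonneg k) (norm_nonneg x))
  rw [mul_pow, norm_apply_sq_eq_sum, ← T.rightSingularBasis.repr.norm_map x,
    EuclideanSpace.real_norm_sq_eq, mul_sum]
  refine sum_le_sum fun i _ ↦ ?_
  rcases lt_or_ge (i : ℕ) k with hi | hi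
  · simp [hx i hi]
  · exact mul_le_mul_of_nonneg_right
      (pow_le_pow_left₀ (T.singularValues_nonneg _) (T.singularValues_antitone hi) 2) (sq_nonneg _)

theorem singularValues_mul_norm_le_norm_apply {k : ℕ} {x : E}
    (hx : ∀ i : Fin (finrank ℝ E), k < (i : ℕ) → T.rightSingularBasis.repr x i = 0) :
    T.singularValues k * ‖x‖ ≤ ‖T x‖ := by
  refine le_of_sq_le_sq ?_ (norm_nonneg _)
  rw [mul_pow, norm_apply_sq_eq_sum, ← T.rightSingularBasis.repr.norm_map x,
    EuclideanSpace.real_norm_sq_eq, mul_sum]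
  refine sum_le_sum fun i _ ↦ ?_
  rcases le_or_gt (i : ℕ) k with hi | hi
  · exact mul_le_mul_of_nonneg_right
      (pow_le_pow_left₀ (T.singularValues_nonneg _) (T.singularValues_antitone hi) 2) (sq_nonneg _)
  · simp [hx i hi]

end LinearMap

namespace ContinuousLinearMap

variable {E F : Type*} [NormedAddCommGroup E] [InnerProductSpace ℝ E] [FiniteDimensional ℝ E]
  [NormedAddCommGroup F] [InnerProductSpace ℝ F] [FiniteDimensional ℝ F] (T : E →L[ℝ] F)

theorem approxNumber_succ_le_singularValues (k : ℕ) :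
    approxNumber (k + 1) T ≤ (T : E →ₗ[ℝ] F).singularValues k := by
  set v := (T : E →ₗ[ℝ] F).rightSingularBasis
  set U := Submodule.span ℝ (v '' ↑({i | (i : ℕ) < k} : Finset (Fin (finrank ℝ E))))
  have hrank :
      finrank ℝ (LinearMap.range ((T ∘L U.starProjection : E →L[ℝ] F) : E →ₗ[ℝ] F)) ≤ k :=
    calc _ = finrank ℝ (U.map (T : E →ₗ[ℝ] F)) := by
          rw [toLinearMap_comp, LinearMap.range_comp, Submodule.range_starProjection]
      _ ≤ finrank ℝ U := Submodule.finrank_map_le _ _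
      _ = min (finrank ℝ E) k := by rw [v.finrank_span_image, Fin.card_filter_val_lt]
      _ ≤ k := min_le_right _ _
  refine (approxNumber_le_norm_sub ((LinearMap.rank_lt_natCast_iff _ _).mpr
    (Nat.lt_succ_of_le hrank))).trans
    (opNorm_le_bound _ (LinearMap.singularValues_nonneg _ _) fun x ↦ ?_)
  have hx : x - U.starProjection x ∈ Uᗮ := U.sub_starProjection_mem_orthogonal x
  calc ‖(T - T ∘L U.starProjection) x‖ = ‖T (x - U.starProjection x)‖ := by simp
    _ ≤ (T : E →ₗ[ℝ] F).singularValues k * ‖x - U.starProjection x‖ :=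
        LinearMap.norm_apply_le_singularValues_mul_norm _ fun i hi ↦
          v.repr_apply_eq_zero_of_mem_orthogonal_span_image hx (by simpa using hi)
    _ ≤ (T : E →ₗ[ℝ] F).singularValues k * ‖x‖ := by
        rw [← U.starProjection_orthogonal_val]
        exact mul_le_mul_of_nonneg_left (Uᗮ.norm_starProjection_apply_le x)
          (LinearMap.singularValues_nonneg _ _)

theorem singularValues_le_approxNumber_succ (k : ℕ) :
    (T : E →ₗ[ℝ] F).singularValues k ≤ approxNumber (k + 1) T := by
  rcases le_or_gt (finrank ℝ E) k with hk | hk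
  · rw [LinearMap.singularValues_of_finrank_le _ hk]
    exact le_approxNumber k.succ_ne_zero fun L _ ↦ norm_nonneg _
  refine le_approxNumber k.succ_ne_zero fun L hL ↦ ?_
  set v := (T : E →ₗ[ℝ] F).rightSingularBasis
  set V := Submodule.span ℝ (v '' ↑({i | (i : ℕ) < k + 1} : Finset (Fin (finrank ℝ E))))
  have hV : finrank ℝ (LinearMap.range (L : E →ₗ[ℝ] F)) < finrank ℝ V := by
    rw [v.finrank_span_image, Fin.card_filter_val_lt, min_eq_right hk]
    exact (LinearMap.rank_lt_natCast_iff _ _).mp hL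
  obtain ⟨x, hxV, hx0, hLx⟩ := LinearMap.exists_mem_ne_zero_map_eq_zero_of_finrank_range_lt _ hV
  refine le_of_mul_le_mul_right ?_ (norm_pos_iff.mpr hx0)
  calc (T : E →ₗ[ℝ] F).singularValues k * ‖x‖ ≤ ‖T x‖ :=
        LinearMap.singularValues_mul_norm_le_norm_apply _ fun i hi ↦
          v.repr_apply_eq_zero_of_mem_span_image hxV (by simpa using hi)
    _ = ‖(T - L) x‖ := by simp [show L x = 0 from hLx]
    _ ≤ ‖T - L‖ * ‖x‖ := le_opNorm _ _

theorem approxNumber_succ_eq_singularValues (k : ℕ) :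
    approxNumber (k + 1) T = (T : E →ₗ[ℝ] F).singularValues k :=
  (T.approxNumber_succ_le_singularValues k).antisymm (T.singularValues_le_approxNumber_succ k)

end ContinuousLinearMap

theorem abs_det_eq_prod_approxNumbers_general (n : ℕ)
    (S : EuclideanSpace ℝ (Fin n) →L[ℝ] EuclideanSpace ℝ (Fin n)) :
    |LinearMap.det (S : EuclideanSpace ℝ (Fin n) →ₗ[ℝ] EuclideanSpace ℝ (Fin n))| =
      ∏ k ∈ Finset.Icc 1 n, approxNumber k S := by
  have hshift : ∏ k ∈ Icc 1 n, approxNumber k S = ∏ k ∈ range n, approxNumber (k + 1) S := by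
    rw [range_eq_Ico, prod_Ico_add' (approxNumber · S) 0 n 1, zero_add, Ico_add_one_right_eq_Icc]
  rw [hshift, ← LinearMap.normDet_eq_abs_det, LinearMap.normDet_eq_prod_singularValues,
    finrank_euclideanSpace_fin]
  simp_rw [S.approxNumber_succ_eq_singularValues]

theorem abs_det_eq_prod_approxNumbers (n : ℕ) (hn : 1 ≤ n)
    (S : EuclideanSpace ℝ (Fin n) →L[ℝ] EuclideanSpace ℝ (Fin n)) :
    |LinearMap.det (S : EuclideanSpace ℝ (Fin n) →ₗ[ℝ] EuclideanSpace ℝ (Fin n))| =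
      ∏ k ∈ Finset.Icc 1 n, approxNumber k S :=
  abs_det_eq_prod_approxNumbers_general n S
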